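/- arXiv:2009.00421 — 3 statements merged into one kernel-verified Lean document; each statement's English description precedes it below -/
import Mathlib

section
/- For every ω ∈ (π, 2π) there exists a real number λ with 1/2 < λ < π/ω such that sin(λω) = −λ sin(ω). -/
/-!
The function `f λ = sin (λ ω) + λ sin ω` is positive at `λ = 1/2`, where it equals
`sin (ω/2) (1 + cos (ω/2))`, and negative at `λ = π/ω`, where it equals `(π/ω) sin ω` with
`sin ω < 0`; the intermediate value theorem gives a root in between.
-/

open Real

theorem neg_one_lt_cos_of_pos_of_lt_pi {x : ℝ} (h0 : 0 < x) (hπ : x < π) : -1 < cos x := by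
  simpa using cos_lt_cos_of_nonneg_of_le_pi h0.le le_rfl hπ

theorem sin_neg_of_pi_lt_of_lt_two_pi {x : ℝ} (hπ : π < x) (h2π : x < 2 * π) : sin x < 0 := by
  simpa using sin_neg_of_neg_of_neg_pi_lt (x := x - 2 * π) (by linarith) (by linarith)

theorem sin_half_mul_add_half_mul_sin_pos {ω : ℝ} (h0 : 0 < ω) (h2π : ω < 2 * π) :
    0 < sin (1 / 2 * ω) + 1 / 2 * sin ω := by
  have hsin : 0 < sin (ω / 2) := sin_pos_of_pos_of_lt_pi (by linarith) (by linarith)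
  have hcos : -1 < cos (ω / 2) := neg_one_lt_cos_of_pos_of_lt_pi (by linarith) (by linarith)
  have hfactor : sin (1 / 2 * ω) + 1 / 2 * sin ω = sin (ω / 2) * (1 + cos (ω / 2)) := by
    have hsin_ω : sin ω = 2 * sin (ω / 2) * cos (ω / 2) := by
      rw [← sin_two_mul, mul_div_cancel₀ ω two_ne_zero]
    rw [hsin_ω, one_div_mul_eq_div]
    ring
  rw [hfactor]
  exact mul_pos hsin (by linarith)

/-- For every `ω ∈ (π, 2π)` there exists `λ` with `1/2 < λ < π/ω` solving the
characteristic equation `sin(λω) = -λ sin(ω)` of the Stokes edge singularity. -/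
theorem stmt1 (ω : ℝ) (h1 : Real.pi < ω) (h2 : ω < 2 * Real.pi) :
    ∃ lam : ℝ, 1 / 2 < lam ∧ lam < Real.pi / ω ∧
      Real.sin (lam * ω) = -lam * Real.sin ω := by
  have hω : 0 < ω := pi_pos.trans h1
  set f : ℝ → ℝ := fun l => sin (l * ω) + l * sin ω
  have hf_half : 0 < f (1 / 2) := sin_half_mul_add_half_mul_sin_pos hω h2
  have hf_pi_div : f (π / ω) < 0 := by
    simp only [f, div_mul_cancel₀ π hω.ne', sin_pi, zero_add]
    exact mul_neg_of_pos_of_neg (div_pos pi_pos hω) (sin_neg_of_pi_lt_of_lt_two_pi h1 h2)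
  have hle : 1 / 2 ≤ π / ω := by
    rw [le_div_iff₀ hω]
    linarith
  obtain ⟨lam, ⟨hlo, hhi⟩, hroot⟩ :=
    intermediate_value_Ioo' hle (by fun_prop : Continuous f).continuousOn ⟨hf_pi_div, hf_half⟩
  exact ⟨lam, hlo, hhi, by linear_combination hroot⟩
end

section
/- For every ν > 0, u is twice differentiable and p is differentiable at every point of Ω, and the Stokes momentum equation −νΔu + ∇p = f holds pointwise on Ω, where Δ acts componentwise on u. -/
open MeasureTheory

noncomputable section

abbrev P3 := ℝ × ℝ × ℝ

/-- Opening angle `ω = 3π/2`. -/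
def om : ℝ := 3 * Real.pi / 2

/-- The domain `Ω = G × (0,1)`, where `G` is the open unit sector of opening angle `ω = 3π/2`. -/
def OmegaSet : Set P3 :=
  {x | ∃ r θ z : ℝ, 0 < r ∧ r < 1 ∧ 0 < θ ∧ θ < om ∧ 0 < z ∧ z < 1 ∧
    x = (r * Real.cos θ, r * Real.sin θ, z)}

/-- `Φ(φ) = 2λ[sin(ω + (λ−1)φ) − sin(λω − (λ−1)φ)]`. -/
def Phi (lam θ : ℝ) : ℝ :=
  2 * lam * (Real.sin (om + (lam - 1) * θ) - Real.sin (lam * om - (lam - 1) * θ))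

/-- First velocity component in polar coordinates. -/
def u1pol (lam r θ z : ℝ) : ℝ :=
  z * r ^ lam * (-(lam * Real.sin θ * Real.cos (lam * (om - θ) + θ)) +
    lam * Real.sin (om - θ) * Real.cos (lam * θ - θ) + Real.sin (lam * (om - θ)))

/-- Second velocity component in polar coordinates. -/
def u2pol (lam r θ z : ℝ) : ℝ :=
  z * r ^ lam * (Real.sin (lam * θ) - lam * Real.sin θ * Real.sin (lam * (om - θ) + θ) -
    lam * Real.sin (om - θ) * Real.sin (lam * θ - θ))

/-- Third velocity component in polar coordinates. -/
def u3pol (r θ : ℝ) : ℝ := r ^ ((2 : ℝ) / 3) * Real.sin (2 / 3 * θ)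

/-- Directional (partial) derivative of a scalar field in direction `v`. -/
def pd (f : P3 → ℝ) (v x : P3) : ℝ := fderiv ℝ f x v

/-- Second partial derivative (direction `v`, twice). -/
def pd2 (f : P3 → ℝ) (v x : P3) : ℝ := fderiv ℝ (fun y => fderiv ℝ f y v) x v

/-- Laplacian of a scalar field on `ℝ³`. -/
def lap3 (f : P3 → ℝ) (x : P3) : ℝ :=
  pd2 f (1, 0, 0) x + pd2 f (0, 1, 0) x + pd2 f (0, 0, 1) x

/-- Gradient of a scalar field on `ℝ³`. -/
def grad3 (f : P3 → ℝ) (x : P3) : P3 :=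
  (pd f (1, 0, 0) x, pd f (0, 1, 0) x, pd f (0, 0, 1) x)

/-- Divergence of a vector field on `ℝ³`. -/
def div3 (u : P3 → P3) (x : P3) : ℝ :=
  pd (fun y => (u y).1) (1, 0, 0) x + pd (fun y => (u y).2.1) (0, 1, 0) x +
    pd (fun y => (u y).2.2) (0, 0, 1) x

/-- Componentwise Laplacian of a vector field on `ℝ³`. -/
def vlap (u : P3 → P3) (x : P3) : P3 :=
  (lap3 (fun y => (u y).1) x, lap3 (fun y => (u y).2.1) x, lap3 (fun y => (u y).2.2) x)

/-- Pressure in polar coordinates: `p = z r^{λ−1} Φ(φ)`. -/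
def ppol (lam r θ z : ℝ) : ℝ := z * r ^ (lam - 1) * Phi lam θ

/-- First component of the data `f` in polar coordinates. -/
def f1pol (lam ν r θ z : ℝ) : ℝ :=
  2 * lam * (lam - 1) * (ν - 1) * z * r ^ (lam - 2) *
    (Real.sin (lam * om - (lam - 2) * θ) - Real.sin (om + (lam - 2) * θ))

/-- Second component of the data `f` in polar coordinates. -/
def f2pol (lam ν r θ z : ℝ) : ℝ :=
  2 * lam * (lam - 1) * (1 - ν) * z * r ^ (lam - 2) *
    (Real.cos (lam * om - (lam - 2) * θ) + Real.cos (om + (lam - 2) * θ))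

/-- Third component of the data `f` in polar coordinates. -/
def f3pol (lam r θ : ℝ) : ℝ := r ^ (lam - 1) * Phi lam θ

/-!
Write `w = x + i y` and let `w ^ a` be the branch cut along the negative imaginary axis, which is
smooth on the whole sector. Then `u₁`, `u₂` and `p` are all of the form
`z · Im (c₁ w ^ a + c₂ w̄ w ^ (a - 1))`, and `u₃ = Im w ^ (2/3)`. This family is closed under
horizontal differentiation: `∂_v` maps `(c₁, c₂, a)` to `(a c₁ v + c₂ v̄, (a - 1) c₂ v, a - 1)`.
Applying this twice, only the non-holomorphic part survives in the Laplacian,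
`Δ Im (c₁ w ^ a + c₂ w̄ w ^ (a - 1)) = Im (4 (a - 1) c₂ w ^ (a - 2))`, so both sides of the momentum
equation become explicit, and the equation reduces to trigonometric identities in polar
coordinates.
-/

open Complex Filter Topology
open scoped Real ComplexConjugate

def cutPlane : Set ℂ := {w | -I * w ∈ slitPlane}

/- A branch of `log` cut along the negative imaginary axis: its imaginary part ranges over
`(-π/2, 3π/2)`, which contains the whole opening `(0, ω)` of the sector. -/
def cutLog (w : ℂ) : ℂ := log (-I * w) + π / 2 * I

def cutPow (a : ℝ) (w : ℂ) : ℂ := exp (a * cutLog w)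

lemma isOpen_cutPlane : IsOpen cutPlane :=
  isOpen_slitPlane.preimage (continuous_const.mul continuous_id)

lemma ne_zero_of_mem_cutPlane {w : ℂ} (hw : w ∈ cutPlane) : w ≠ 0 := by
  rintro rfl
  simp [cutPlane] at hw

lemma exp_cutLog {w : ℂ} (hw : w ∈ cutPlane) : exp (cutLog w) = w := by
  rw [cutLog, exp_add, exp_log (slitPlane_ne_zero hw), exp_pi_div_two_mul_I]
  linear_combination (-w) * I_mul_I

lemma hasDerivAt_cutLog {w : ℂ} (hw : w ∈ cutPlane) : HasDerivAt cutLog w⁻¹ w := by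
  have h : HasDerivAt cutLog ((-I * w)⁻¹ * (-I * 1)) w :=
    ((hasDerivAt_log hw).comp w ((hasDerivAt_id w).const_mul (-I))).add_const (π / 2 * I)
  refine h.congr_deriv ?_
  field_simp [ne_zero_of_mem_cutPlane hw]

lemma cutPow_eq_mul_cutPow_sub_one (a : ℝ) {w : ℂ} (hw : w ∈ cutPlane) :
    cutPow a w = w * cutPow (a - 1) w := by
  conv_rhs => enter [1]; rw [← exp_cutLog hw]
  rw [cutPow, cutPow, ← exp_add]
  congr 1
  push_cast
  ring

lemma hasDerivAt_cutPow (a : ℝ) {w : ℂ} (hw : w ∈ cutPlane) :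
    HasDerivAt (cutPow a) (a * cutPow (a - 1) w) w := by
  have h := (hasDerivAt_exp _).comp w ((hasDerivAt_cutLog hw).const_mul (a : ℂ))
  refine h.congr_deriv ?_
  rw [show exp (a * cutLog w) = cutPow a w from rfl, cutPow_eq_mul_cutPow_sub_one a hw]
  field_simp [ne_zero_of_mem_cutPlane hw]

lemma contDiffAt_cutPow (a : ℝ) {w : ℂ} (hw : w ∈ cutPlane) {n : WithTop ℕ∞} :
    ContDiffAt ℂ n (cutPow a) w :=
  contDiff_exp.contDiffAt.comp w <| contDiffAt_const.mul <|
    ((contDiffAt_log hw).comp w (contDiffAt_const.mul contDiffAt_id)).add contDiffAt_const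

lemma neg_I_mul_polar {r : ℝ} (hr : 0 < r) (θ : ℝ) :
    -I * (r * exp (θ * I)) = exp (Real.log r + ((θ - π / 2 : ℝ) : ℂ) * I) := by
  rw [exp_add, ← ofReal_exp, Real.exp_log hr, ofReal_sub, sub_mul, exp_sub, ofReal_div,
    ofReal_ofNat, exp_pi_div_two_mul_I]
  field_simp
  linear_combination (-(r : ℂ)) * I_sq

lemma polar_mem_cutPlane {r θ : ℝ} (hr : 0 < r) (hθ₁ : -(π / 2) < θ) (hθ₂ : θ < 3 * π / 2) :
    (r * exp (θ * I) : ℂ) ∈ cutPlane := by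
  show _ ∈ slitPlane
  rw [neg_I_mul_polar hr, exp_mem_slitPlane]
  have hIm : (Real.log r + ((θ - π / 2 : ℝ) : ℂ) * I).im = θ - π / 2 := by simp
  rw [hIm, toIocMod_eq_self _ |>.2 ⟨by linarith, by linarith⟩]
  exact (by linarith : θ - π / 2 < π).ne

lemma cutLog_polar {r θ : ℝ} (hr : 0 < r) (hθ₁ : -(π / 2) < θ) (hθ₂ : θ < 3 * π / 2) :
    cutLog (r * exp (θ * I)) = Real.log r + θ * I := by
  have hIm : (Real.log r + ((θ - π / 2 : ℝ) : ℂ) * I).im = θ - π / 2 := by simp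
  rw [cutLog, neg_I_mul_polar hr, log_exp (by rw [hIm]; linarith) (by rw [hIm]; linarith)]
  push_cast
  ring

lemma cutPow_polar (a : ℝ) {r θ : ℝ} (hr : 0 < r) (hθ₁ : -(π / 2) < θ) (hθ₂ : θ < 3 * π / 2) :
    cutPow a (r * exp (θ * I)) = ((r ^ a : ℝ) : ℂ) * exp ((a * θ : ℝ) * I) := by
  rw [cutPow, cutLog_polar hr hθ₁ hθ₂, Real.rpow_def_of_pos hr, ofReal_exp, ← exp_add]
  congr 1
  push_cast
  ring

def goursat (c : ℂ × ℂ) (a : ℝ) (w : ℂ) : ℝ :=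
  (c.1 * cutPow a w + c.2 * conj w * cutPow (a - 1) w).im

def goursatDeriv (a : ℝ) (v : ℂ) (c : ℂ × ℂ) : ℂ × ℂ :=
  (c.1 * a * v + c.2 * conj v, c.2 * (a - 1) * v)

lemma goursat_add_coeff (c d : ℂ × ℂ) (a : ℝ) (w : ℂ) :
    goursat (c + d) a w = goursat c a w + goursat d a w := by
  simp only [goursat, Prod.fst_add, Prod.snd_add, ← add_im]
  congr 1
  ring

@[simp]
lemma goursat_zero_coeff (a : ℝ) (w : ℂ) : goursat 0 a w = 0 := by
  simp [goursat]

@[simp]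
lemma goursatDeriv_zero_dir (a : ℝ) (c : ℂ × ℂ) : goursatDeriv a 0 c = 0 := by
  simp [goursatDeriv]

lemma fderiv_goursat_apply (c : ℂ × ℂ) (a : ℝ) {w : ℂ} (hw : w ∈ cutPlane) (v : ℂ) :
    fderiv ℝ (goursat c a) w v = goursat (goursatDeriv a v c) (a - 1) w := by
  have hconj : HasFDerivAt (conj : ℂ → ℂ) conjCLE.toContinuousLinearMap w :=
    conjCLE.toContinuousLinearMap.hasFDerivAt
  have h : HasFDerivAt (goursat c a) _ w := imCLM.hasFDerivAt.comp w
    ((((hasDerivAt_cutPow a hw).hasFDerivAt.restrictScalars ℝ).const_mul c.1).add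
      ((hconj.const_mul c.2).mul ((hasDerivAt_cutPow (a - 1) hw).hasFDerivAt.restrictScalars ℝ)))
  rw [h.fderiv]
  simp only [ContinuousLinearMap.comp_apply, add_apply,
    smul_apply, ContinuousLinearMap.coe_restrictScalars',
    ContinuousLinearMap.toSpanSingleton_apply, ContinuousLinearEquiv.coe_coe, conjCLE_apply,
    smul_eq_mul, imCLM_apply, goursat, goursatDeriv]
  congr 1
  push_cast
  ring

lemma contDiffAt_goursat (c : ℂ × ℂ) (a : ℝ) {w : ℂ} (hw : w ∈ cutPlane) {n : WithTop ℕ∞} :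
    ContDiffAt ℝ n (goursat c a) w := by
  have hpow (b : ℝ) : ContDiffAt ℝ n (cutPow b) w := (contDiffAt_cutPow b hw).restrict_scalars ℝ
  exact imCLM.contDiff.contDiffAt.comp w <| (contDiffAt_const.mul (hpow a)).add
    ((contDiffAt_const.mul conjCLE.contDiff.contDiffAt).mul (hpow (a - 1)))

lemma goursat_laplacian (c : ℂ × ℂ) (a : ℝ) (w : ℂ) :
    goursat (goursatDeriv (a - 1) 1 (goursatDeriv a 1 c)) (a - 1 - 1) w +
      goursat (goursatDeriv (a - 1) I (goursatDeriv a I c)) (a - 1 - 1) w =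
      goursat (4 * c.2 * (a - 1), 0) (a - 2) w := by
  rw [← goursat_add_coeff, sub_sub, one_add_one_eq_two]
  congr 1
  simp only [goursatDeriv, Prod.mk_add_mk, map_one, conj_I, Prod.mk.injEq]
  push_cast
  constructor
  · linear_combination (c.1 * a ^ 2 - c.1 * a - 2 * a * c.2 + 2 * c.2) * I_sq
  · linear_combination c.2 * (a ^ 2 - 3 * a + 2) * I_sq

lemma goursat_polar (c : ℂ × ℂ) (a : ℝ) {r θ : ℝ} (hr : 0 < r) (hθ₁ : -(π / 2) < θ)
    (hθ₂ : θ < 3 * π / 2) :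
    goursat c a (r * exp (θ * I)) =
      r ^ a * (c.1 * exp ((a * θ : ℝ) * I) + c.2 * exp (((a - 2) * θ : ℝ) * I)).im := by
  have hexp : conj (exp (θ * I)) * exp (((a - 1) * θ : ℝ) * I) = exp (((a - 2) * θ : ℝ) * I) := by
    rw [← exp_conj, ← exp_add]
    congr 1
    simp only [map_mul, conj_ofReal, conj_I]
    push_cast
    ring
  rw [goursat, cutPow_polar a hr hθ₁ hθ₂, cutPow_polar (a - 1) hr hθ₁ hθ₂, map_mul, conj_ofReal,
    Real.rpow_sub_one hr.ne', ← im_ofReal_mul]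
  congr 1
  have hr' : (r : ℂ) ≠ 0 := ofReal_ne_zero.2 hr.ne'
  rw [ofReal_div, ← hexp]
  field_simp

def toComplex : P3 →L[ℝ] ℂ :=
  ofRealCLM.comp (ContinuousLinearMap.fst ℝ ℝ (ℝ × ℝ)) +
    I • ofRealCLM.comp ((ContinuousLinearMap.fst ℝ ℝ ℝ).comp (ContinuousLinearMap.snd ℝ ℝ (ℝ × ℝ)))

@[simp]
lemma toComplex_apply (q : P3) : toComplex q = q.1 + q.2.1 * I := by
  simp [toComplex, mul_comm]

lemma toComplex_polar (r θ z : ℝ) :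
    toComplex (r * Real.cos θ, r * Real.sin θ, z) = r * exp (θ * I) := by
  rw [toComplex_apply, exp_mul_I, ← ofReal_cos, ← ofReal_sin]
  push_cast
  ring

lemma toComplex_polar_mem_cutPlane {r θ : ℝ} (z : ℝ) (hr : 0 < r) (hθ₁ : -(π / 2) < θ)
    (hθ₂ : θ < 3 * π / 2) : toComplex (r * Real.cos θ, r * Real.sin θ, z) ∈ cutPlane := by
  rw [toComplex_polar]
  exact polar_mem_cutPlane hr hθ₁ hθ₂

def goursatField (c : ℂ × ℂ) (a : ℝ) (q : P3) : ℝ := goursat c a (toComplex q)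

def zGoursatField (c : ℂ × ℂ) (a : ℝ) (q : P3) : ℝ := q.2.2 * goursatField c a q

section Fields

variable {c : ℂ × ℂ} {a : ℝ} {q : P3}

lemma contDiffAt_goursatField (hq : toComplex q ∈ cutPlane) {n : WithTop ℕ∞} :
    ContDiffAt ℝ n (goursatField c a) q :=
  (contDiffAt_goursat c a hq).comp q toComplex.contDiff.contDiffAt

lemma contDiffAt_zGoursatField (hq : toComplex q ∈ cutPlane) {n : WithTop ℕ∞} :
    ContDiffAt ℝ n (zGoursatField c a) q :=
  (contDiff_snd.snd).contDiffAt.mul (contDiffAt_goursatField hq)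

lemma fderiv_goursatField_apply (hq : toComplex q ∈ cutPlane) (v : P3) :
    fderiv ℝ (goursatField c a) q v = goursatField (goursatDeriv a (toComplex v) c) (a - 1) q := by
  have h := ((contDiffAt_goursat c a hq (n := 1)).differentiableAt one_ne_zero).hasFDerivAt.comp q
    toComplex.hasFDerivAt
  rw [show goursatField c a = goursat c a ∘ toComplex from rfl, h.fderiv,
    ContinuousLinearMap.comp_apply, fderiv_goursat_apply c a hq]
  rfl

lemma fderiv_zGoursatField_apply (hq : toComplex q ∈ cutPlane) (v : P3) :
    fderiv ℝ (zGoursatField c a) q v =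
      zGoursatField (goursatDeriv a (toComplex v) c) (a - 1) q + v.2.2 * goursatField c a q := by
  have h : HasFDerivAt (zGoursatField c a) _ q := hasFDerivAt_snd.snd.mul
    ((contDiffAt_goursatField (c := c) (a := a) hq (n := 1)).differentiableAt
      one_ne_zero).hasFDerivAt
  rw [h.fderiv]
  simp [zGoursatField, fderiv_goursatField_apply hq, mul_comm]

lemma eventually_mem_cutPlane (hq : toComplex q ∈ cutPlane) :
    ∀ᶠ y in 𝓝 q, toComplex y ∈ cutPlane :=
  (isOpen_cutPlane.preimage toComplex.continuous).mem_nhds hq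

lemma pd2_eq_of_eventuallyEq {F G : P3 → ℝ} {v x : P3}
    (h : (fun y => fderiv ℝ F y v) =ᶠ[𝓝 x] G) : pd2 F v x = fderiv ℝ G x v := by
  rw [pd2, h.fderiv_eq]

lemma pd2_goursatField (hq : toComplex q ∈ cutPlane) (v : P3) :
    pd2 (goursatField c a) v q = goursatField
      (goursatDeriv (a - 1) (toComplex v) (goursatDeriv a (toComplex v) c)) (a - 1 - 1) q := by
  rw [pd2_eq_of_eventuallyEq ((eventually_mem_cutPlane hq).mono
    fun y hy => fderiv_goursatField_apply hy v), fderiv_goursatField_apply hq]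

lemma pd2_zGoursatField (hq : toComplex q ∈ cutPlane) (v : P3) :
    pd2 (zGoursatField c a) v q =
      zGoursatField
        (goursatDeriv (a - 1) (toComplex v) (goursatDeriv a (toComplex v) c)) (a - 1 - 1) q +
      2 * v.2.2 * goursatField (goursatDeriv a (toComplex v) c) (a - 1) q := by
  set c' := goursatDeriv a (toComplex v) c
  have h : HasFDerivAt (fun y => zGoursatField c' (a - 1) y + v.2.2 * goursatField c a y) _ q :=
    ((contDiffAt_zGoursatField hq (n := 1)).differentiableAt one_ne_zero).hasFDerivAt.add
      (((contDiffAt_goursatField hq (n := 1)).differentiableAt one_ne_zero).hasFDerivAt.const_mul _)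
  rw [pd2_eq_of_eventuallyEq ((eventually_mem_cutPlane hq).mono
    fun y hy => fderiv_zGoursatField_apply hy v), h.fderiv]
  simp only [add_apply, smul_apply, smul_eq_mul, fderiv_zGoursatField_apply hq,
    fderiv_goursatField_apply hq]
  ring

lemma toComplex_e₁ : toComplex (1, 0, 0) = 1 := by simp
lemma toComplex_e₂ : toComplex (0, 1, 0) = I := by simp
lemma toComplex_e₃ : toComplex (0, 0, 1) = 0 := by simp

lemma lap3_goursatField (hq : toComplex q ∈ cutPlane) :
    lap3 (goursatField c a) q = goursatField (4 * c.2 * (a - 1), 0) (a - 2) q := by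
  rw [lap3, pd2_goursatField hq, pd2_goursatField hq, pd2_goursatField hq, toComplex_e₁,
    toComplex_e₂, toComplex_e₃, goursatDeriv_zero_dir]
  simp only [goursatField, goursat_zero_coeff, add_zero]
  exact goursat_laplacian c a _

lemma lap3_zGoursatField (hq : toComplex q ∈ cutPlane) :
    lap3 (zGoursatField c a) q = q.2.2 * goursatField (4 * c.2 * (a - 1), 0) (a - 2) q := by
  rw [lap3, pd2_zGoursatField hq, pd2_zGoursatField hq, pd2_zGoursatField hq, toComplex_e₁,
    toComplex_e₂, toComplex_e₃]
  simp only [zGoursatField, goursatField, goursatDeriv_zero_dir, goursat_zero_coeff, zero_mul,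
    mul_zero, add_zero, ← mul_add]
  rw [goursat_laplacian]

lemma grad3_zGoursatField (hq : toComplex q ∈ cutPlane) :
    grad3 (zGoursatField c a) q =
      (zGoursatField (goursatDeriv a 1 c) (a - 1) q,
        zGoursatField (goursatDeriv a I c) (a - 1) q, goursatField c a q) := by
  simp [grad3, pd, fderiv_zGoursatField_apply hq, zGoursatField, goursatField]

end Fields

namespace Filter.EventuallyEq

variable {F G : P3 → ℝ} {x : P3}

lemma pd_eq (h : F =ᶠ[𝓝 x] G) (v : P3) : pd F v x = pd G v x := by
  rw [pd, pd, h.fderiv_eq]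

lemma pd2_eq (h : F =ᶠ[𝓝 x] G) (v : P3) : pd2 F v x = pd2 G v x :=
  pd2_eq_of_eventuallyEq <| (h.fderiv (𝕜 := ℝ)).mono fun _ hy => congrArg (· v) hy

lemma grad3_eq (h : F =ᶠ[𝓝 x] G) : grad3 F x = grad3 G x := by
  rw [grad3, grad3, h.pd_eq, h.pd_eq, h.pd_eq]

lemma lap3_eq (h : F =ᶠ[𝓝 x] G) : lap3 F x = lap3 G x := by
  rw [lap3, lap3, h.pd2_eq, h.pd2_eq, h.pd2_eq]

lemma vlap_eq {U V : P3 → P3} (h : U =ᶠ[𝓝 x] V) : vlap U x = vlap V x := by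
  have h₁ : (fun y => (U y).1) =ᶠ[𝓝 x] fun y => (V y).1 := h.fun_comp Prod.fst
  have h₂ : (fun y => (U y).2.1) =ᶠ[𝓝 x] fun y => (V y).2.1 := h.fun_comp (·.2.1)
  have h₃ : (fun y => (U y).2.2) =ᶠ[𝓝 x] fun y => (V y).2.2 := h.fun_comp (·.2.2)
  rw [vlap, vlap, h₁.lap3_eq, h₂.lap3_eq, h₃.lap3_eq]

end Filter.EventuallyEq

lemma norm_polar {r : ℝ} (hr : 0 ≤ r) (θ : ℝ) : ‖(r * exp (θ * I) : ℂ)‖ = r := by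
  rw [norm_mul, norm_exp_ofReal_mul_I, mul_one, norm_real, Real.norm_of_nonneg hr]

lemma polar_cutLog {w : ℂ} (hw : w ∈ cutPlane) : (‖w‖ : ℂ) * exp ((cutLog w).im * I) = w := by
  have hnorm : ‖w‖ = Real.exp (cutLog w).re := by
    conv_lhs => rw [← exp_cutLog hw]
    exact norm_exp _
  rw [hnorm, ofReal_exp, ← exp_add, re_add_im, exp_cutLog hw]

lemma eq_polar_of_mem_cutPlane {q : P3} (hq : toComplex q ∈ cutPlane) :
    q = (‖toComplex q‖ * Real.cos (cutLog (toComplex q)).im,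
      ‖toComplex q‖ * Real.sin (cutLog (toComplex q)).im, q.2.2) := by
  have h := (toComplex_polar _ _ q.2.2).trans (polar_cutLog hq)
  simp only [toComplex_apply, Complex.ext_iff, add_re, add_im, mul_re, mul_im, ofReal_re, ofReal_im,
    I_re, I_im, mul_zero, mul_one, sub_zero, zero_add, add_zero] at h
  refine Prod.ext ?_ (Prod.ext ?_ rfl) <;> simp only [toComplex_apply]
  exacts [h.1.symm, h.2.symm]

lemma isOpen_omegaSet : IsOpen OmegaSet := by
  rw [isOpen_iff_mem_nhds]
  rintro _ ⟨r, θ, z, hr₀, hr₁, hθ₀, hθω, hz₀, hz₁, rfl⟩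
  have hθ₂ : θ < 3 * π / 2 := hθω
  have hw := toComplex_polar_mem_cutPlane z hr₀ (by linarith [Real.pi_pos]) hθ₂
  have harg : (cutLog (toComplex (r * Real.cos θ, r * Real.sin θ, z))).im = θ := by
    rw [toComplex_polar, cutLog_polar hr₀ (by linarith [Real.pi_pos]) hθ₂]
    simp
  have hnorm : ‖toComplex (r * Real.cos θ, r * Real.sin θ, z)‖ = r := by
    rw [toComplex_polar, norm_polar hr₀.le]
  have hcont : ContinuousAt (fun q => (cutLog (toComplex q)).im)
      (r * Real.cos θ, r * Real.sin θ, z) :=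
    continuous_im.continuousAt.comp <|
      (hasDerivAt_cutLog hw).continuousAt.comp toComplex.continuous.continuousAt
  filter_upwards [eventually_mem_cutPlane hw,
    (continuous_norm.comp toComplex.continuous).continuousAt.eventually_lt continuousAt_const
      (hnorm.trans_lt hr₁),
    continuousAt_const.eventually_lt hcont (harg.symm ▸ hθ₀),
    hcont.eventually_lt continuousAt_const (harg.trans_lt hθω),
    continuousAt_const.eventually_lt continuous_snd.snd.continuousAt hz₀,
    continuous_snd.snd.continuousAt.eventually_lt continuousAt_const hz₁] with q hq h₁ h₂ h₃ h₄ h₅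
  exact ⟨_, _, _, norm_pos_iff.2 (ne_zero_of_mem_cutPlane hq), h₁, h₂, h₃, h₄, h₅,
    eq_polar_of_mem_cutPlane hq⟩

/- The coefficients come from expanding the products of sines and cosines in `u1pol`, `u2pol`
and `Phi` into exponentials. -/
def velocityCoeff₁ (lam : ℝ) : ℂ × ℂ :=
  (-(lam / 2 : ℝ) * exp ((-om : ℝ) * I) - (1 + lam / 2 : ℝ) * exp ((-(lam * om) : ℝ) * I),
    (lam / 2 : ℝ) * (exp ((-(lam * om) : ℝ) * I) + exp (om * I)))

def velocityCoeff₂ (lam : ℝ) : ℂ × ℂ :=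
  (1 - (lam / 2 : ℝ) * I * (exp ((-(lam * om) : ℝ) * I) + exp ((-om : ℝ) * I)),
    (lam / 2 : ℝ) * I * (exp ((-(lam * om) : ℝ) * I) + exp (om * I)))

def pressureCoeff (lam : ℝ) : ℂ × ℂ :=
  ((2 * lam : ℝ) * (exp (om * I) + exp ((-(lam * om) : ℝ) * I)), 0)

def velocity (lam : ℝ) (q : P3) : P3 :=
  (zGoursatField (velocityCoeff₁ lam) lam q, zGoursatField (velocityCoeff₂ lam) lam q,
    goursatField (1, 0) (2 / 3) q)

def pressure (lam : ℝ) : P3 → ℝ := zGoursatField (pressureCoeff lam) (lam - 1)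

section Polar

variable {lam r θ : ℝ} (z : ℝ) (hr : 0 < r) (hθ₁ : -(π / 2) < θ) (hθ₂ : θ < 3 * π / 2)
include hr hθ₁ hθ₂

lemma velocity_polar :
    velocity lam (r * Real.cos θ, r * Real.sin θ, z) =
      (u1pol lam r θ z, u2pol lam r θ z, u3pol r θ) := by
  simp only [velocity, zGoursatField, goursatField, toComplex_polar, goursat_polar _ _ hr hθ₁ hθ₂,
    Prod.mk.injEq]
  refine ⟨?_, ?_, by simp only [u3pol, one_mul, zero_mul, add_zero, exp_ofReal_mul_I_im]⟩ <;>
  · simp only [u1pol, u2pol, velocityCoeff₁, velocityCoeff₂, exp_mul_I, ← ofReal_cos,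
      ← ofReal_sin]
    simp only [add_im, sub_im, mul_im, mul_re, add_re, sub_re, neg_re, neg_im, ofReal_re,
      ofReal_im, I_re, I_im, one_re, one_im]
    simp only [mul_sub, sub_mul, mul_add, add_mul, Real.sin_add, Real.cos_add, Real.sin_sub,
      Real.cos_sub, Real.sin_neg, Real.cos_neg, Real.sin_two_mul, Real.cos_two_mul]
    ring_nf
    simp only [Real.cos_sq']
    ring

lemma pressure_polar :
    pressure lam (r * Real.cos θ, r * Real.sin θ, z) = ppol lam r θ z := by
  simp only [pressure, zGoursatField, goursatField, toComplex_polar, goursat_polar _ _ hr hθ₁ hθ₂]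
  simp only [ppol, Phi, pressureCoeff, zero_mul, add_zero, exp_mul_I, ← ofReal_cos, ← ofReal_sin]
  simp only [add_im, mul_im, mul_re, add_re, ofReal_re, ofReal_im, I_re, I_im]
  simp only [mul_sub, sub_mul, mul_add, add_mul, Real.sin_add, Real.sin_sub, Real.cos_sub,
    Real.sin_neg, Real.cos_neg]
  ring

lemma stokes_polar (ν : ℝ) :
    (-ν) • vlap (velocity lam) (r * Real.cos θ, r * Real.sin θ, z) +
        grad3 (pressure lam) (r * Real.cos θ, r * Real.sin θ, z) =
      (f1pol lam ν r θ z, f2pol lam ν r θ z, f3pol lam r θ) := by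
  have hq := toComplex_polar_mem_cutPlane z hr hθ₁ hθ₂
  have h₁ : (fun y => (velocity lam y).1) = zGoursatField (velocityCoeff₁ lam) lam := rfl
  have h₂ : (fun y => (velocity lam y).2.1) = zGoursatField (velocityCoeff₂ lam) lam := rfl
  have h₃ : (fun y => (velocity lam y).2.2) = goursatField (1, 0) (2 / 3) := rfl
  rw [vlap, h₁, h₂, h₃, lap3_zGoursatField hq, lap3_zGoursatField hq, lap3_goursatField hq,
    pressure, grad3_zGoursatField hq]
  simp only [zGoursatField, goursatField, toComplex_polar, goursat_polar _ _ hr hθ₁ hθ₂,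
    Prod.smul_mk, Prod.mk_add_mk, smul_eq_mul, Prod.mk.injEq]
  rw [show lam - 1 - 1 = lam - 2 by ring]
  refine ⟨?_, ?_, ?_⟩
  all_goals
    simp only [f1pol, f2pol, f3pol, Phi, velocityCoeff₁, velocityCoeff₂, pressureCoeff,
      goursatDeriv, exp_mul_I, ← ofReal_cos, ← ofReal_sin]
    simp only [add_im, sub_im, mul_im, mul_re, add_re, sub_re, ofReal_re, ofReal_im, I_re, I_im,
      one_re, one_im, zero_re, zero_im, re_ofNat, im_ofNat]
    simp only [Real.sin_add, Real.cos_add, Real.sin_sub, Real.cos_sub, Real.sin_neg, Real.cos_neg]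
    ring

end Polar

lemma contDiffAt_velocity {lam : ℝ} {q : P3} (hq : toComplex q ∈ cutPlane) {n : WithTop ℕ∞} :
    ContDiffAt ℝ n (velocity lam) q :=
  (contDiffAt_zGoursatField hq).prodMk
    ((contDiffAt_zGoursatField hq).prodMk (contDiffAt_goursatField hq))

theorem stmt5_general (lam : ℝ)
    (ν : ℝ)
    (u : P3 → P3) (p : P3 → ℝ) (f : P3 → P3)
    (hu : ∀ r θ z : ℝ, 0 < r → r < 1 → 0 < θ → θ < om → 0 < z → z < 1 →
      u (r * Real.cos θ, r * Real.sin θ, z) = (u1pol lam r θ z, u2pol lam r θ z, u3pol r θ))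
    (hp : ∀ r θ z : ℝ, 0 < r → r < 1 → 0 < θ → θ < om → 0 < z → z < 1 →
      p (r * Real.cos θ, r * Real.sin θ, z) = ppol lam r θ z)
    (hf : ∀ r θ z : ℝ, 0 < r → r < 1 → 0 < θ → θ < om → 0 < z → z < 1 →
      f (r * Real.cos θ, r * Real.sin θ, z) =
        (f1pol lam ν r θ z, f2pol lam ν r θ z, f3pol lam r θ)) :
    ∀ x ∈ OmegaSet,
      (DifferentiableAt ℝ u x ∧ DifferentiableAt ℝ (fderiv ℝ u) x) ∧
      DifferentiableAt ℝ p x ∧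
      (-ν) • vlap u x + grad3 p x = f x := by
  have hsector {θ : ℝ} (hθ₀ : 0 < θ) (hθω : θ < om) : -(π / 2) < θ ∧ θ < 3 * π / 2 :=
    ⟨by linarith [Real.pi_pos], hθω⟩
  intro x hx
  have hu' : u =ᶠ[𝓝 x] velocity lam := by
    filter_upwards [isOpen_omegaSet.mem_nhds hx] with y hy
    obtain ⟨r, θ, z, hr₀, hr₁, hθ₀, hθω, hz₀, hz₁, rfl⟩ := hy
    rw [hu r θ z hr₀ hr₁ hθ₀ hθω hz₀ hz₁,
      velocity_polar z hr₀ (hsector hθ₀ hθω).1 (hsector hθ₀ hθω).2]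
  have hp' : p =ᶠ[𝓝 x] pressure lam := by
    filter_upwards [isOpen_omegaSet.mem_nhds hx] with y hy
    obtain ⟨r, θ, z, hr₀, hr₁, hθ₀, hθω, hz₀, hz₁, rfl⟩ := hy
    rw [hp r θ z hr₀ hr₁ hθ₀ hθω hz₀ hz₁,
      pressure_polar z hr₀ (hsector hθ₀ hθω).1 (hsector hθ₀ hθω).2]
  obtain ⟨r, θ, z, hr₀, hr₁, hθ₀, hθω, hz₀, hz₁, rfl⟩ := hx
  obtain ⟨hθ₁, hθ₂⟩ := hsector hθ₀ hθω
  have hq := toComplex_polar_mem_cutPlane z hr₀ hθ₁ hθ₂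
  have hU : ContDiffAt ℝ 2 (velocity lam) _ := contDiffAt_velocity hq
  refine ⟨⟨hu'.differentiableAt_iff.2 (hU.differentiableAt two_ne_zero),
    hu'.fderiv.differentiableAt_iff.2 ((hU.fderiv_right (m := 1) le_rfl).differentiableAt
      one_ne_zero)⟩,
    hp'.differentiableAt_iff.2 ((contDiffAt_zGoursatField hq (n := 1)).differentiableAt
      one_ne_zero), ?_⟩
  rw [hu'.vlap_eq, hp'.grad3_eq, hf r θ z hr₀ hr₁ hθ₀ hθω hz₀ hz₁, stokes_polar z hr₀ hθ₁ hθ₂]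

/-- For every `ν > 0`: `u` is twice differentiable and `p` differentiable at every point
of `Ω`, and the Stokes momentum equation `−νΔu + ∇p = f` holds pointwise on `Ω`. -/
theorem stmt5 (lam : ℝ) (hlam0 : 0 < lam) (hlam1 : lam < 1)
    (hlamEq : Real.sin (lam * om) = -lam * Real.sin om)
    (ν : ℝ) (hν : 0 < ν)
    (u : P3 → P3) (p : P3 → ℝ) (f : P3 → P3)
    (hu : ∀ r θ z : ℝ, 0 < r → r < 1 → 0 < θ → θ < om → 0 < z → z < 1 →
      u (r * Real.cos θ, r * Real.sin θ, z) = (u1pol lam r θ z, u2pol lam r θ z, u3pol r θ))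
    (hp : ∀ r θ z : ℝ, 0 < r → r < 1 → 0 < θ → θ < om → 0 < z → z < 1 →
      p (r * Real.cos θ, r * Real.sin θ, z) = ppol lam r θ z)
    (hf : ∀ r θ z : ℝ, 0 < r → r < 1 → 0 < θ → θ < om → 0 < z → z < 1 →
      f (r * Real.cos θ, r * Real.sin θ, z) =
        (f1pol lam ν r θ z, f2pol lam ν r θ z, f3pol lam r θ)) :
    ∀ x ∈ OmegaSet,
      (DifferentiableAt ℝ u x ∧ DifferentiableAt ℝ (fderiv ℝ u) x) ∧
      DifferentiableAt ℝ p x ∧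
      (-ν) • vlap u x + grad3 p x = f x :=
  stmt5_general lam ν u p f hu hp hf
end
end

section
/- For every ν > 0 with ν ≠ 1, the data function f fails to be square-integrable: ∫_Ω ‖f(x,y,z)‖² d(x,y,z) = ∞, i.e. f ∉ L²(Ω; ℝ³). -/
open MeasureTheory

noncomputable section

/-!
On the sector the two horizontal components of `f` combine, by
`(sin α - sin β)² + (cos α + cos β)² = 4 cos² ((α + β) / 2)`, into
`f₁² + f₂² = κ z² r^{2λ-4}` with `κ = (4λ(λ-1)(ν-1) cos ((λ+1)ω/2))²`, and `κ > 0` because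
`ν ≠ 1` and `(λ+1)ω/2 ∈ (π/2, 3π/2)`. Integrating `r^{2λ-4}` over the box `(0,ε)² × (1/2,1)`,
which lies in `Ω`, gives at least a constant times `ε^{2λ-2}`, and this blows up as `ε → 0⁺`
since `λ < 1`.
-/

open MeasureTheory Set Filter Topology Real

theorem exists_polar_of_pos_right {a b : ℝ} (hb : 0 < b) :
    ∃ r θ : ℝ, 0 < r ∧ r ^ 2 = a ^ 2 + b ^ 2 ∧ 0 < θ ∧ θ ≤ π ∧
      r * cos θ = a ∧ r * sin θ = b := by
  let w : ℂ := ⟨a, b⟩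
  have hw : w ≠ 0 := fun h => hb.ne' (congrArg Complex.im h)
  refine ⟨‖w‖, w.arg, norm_pos_iff.mpr hw, ?_, ?_, w.arg_le_pi,
    Complex.norm_mul_cos_arg w, Complex.norm_mul_sin_arg w⟩
  · rw [Complex.sq_norm, Complex.normSq_mk]
    ring
  · refine (Complex.arg_nonneg_iff.mpr hb.le).lt_of_ne' fun h => hb.ne' ?_
    exact (Complex.arg_eq_zero_iff.mp h).2

theorem exists_polar_mem_sector {a b : ℝ} (hb : 0 < b) (hab : a ^ 2 + b ^ 2 < 1) :
    ∃ r θ : ℝ, 0 < r ∧ r < 1 ∧ 0 < θ ∧ θ < om ∧ r ^ 2 = a ^ 2 + b ^ 2 ∧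
      r * cos θ = a ∧ r * sin θ = b := by
  obtain ⟨r, θ, hr, hr2, hθ, hθπ, hcos, hsin⟩ := exists_polar_of_pos_right (a := a) hb
  refine ⟨r, θ, hr, ?_, hθ, ?_, hr2, hcos, hsin⟩
  · nlinarith
  · unfold om
    linarith [pi_pos]

theorem mk_mem_OmegaSet {a b z : ℝ} (hb : 0 < b) (hab : a ^ 2 + b ^ 2 < 1)
    (hz₀ : 0 < z) (hz₁ : z < 1) : (a, b, z) ∈ OmegaSet := by
  obtain ⟨r, θ, hr, hr1, hθ, hθω, -, hcos, hsin⟩ := exists_polar_mem_sector hb hab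
  exact ⟨r, θ, z, hr, hr1, hθ, hθω, hz₀, hz₁, by rw [hcos, hsin]⟩

theorem sin_sub_sin_sq_add_cos_add_cos_sq (α β : ℝ) :
    (sin α - sin β) ^ 2 + (cos α + cos β) ^ 2 = 4 * cos ((α + β) / 2) ^ 2 := by
  rw [cos_sq, show 2 * ((α + β) / 2) = α + β by ring, cos_add]
  linear_combination sin_sq_add_cos_sq α + sin_sq_add_cos_sq β

def fHorizontalCoeff (lam ν : ℝ) : ℝ :=
  (4 * lam * (lam - 1) * (ν - 1) * cos ((lam + 1) * om / 2)) ^ 2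

theorem f1pol_sq_add_f2pol_sq (lam ν r θ z : ℝ) :
    f1pol lam ν r θ z ^ 2 + f2pol lam ν r θ z ^ 2 =
      fHorizontalCoeff lam ν * z ^ 2 * (r ^ (lam - 2)) ^ 2 := by
  have h := sin_sub_sin_sq_add_cos_add_cos_sq (lam * om - (lam - 2) * θ) (om + (lam - 2) * θ)
  rw [show (lam * om - (lam - 2) * θ + (om + (lam - 2) * θ)) / 2 = (lam + 1) * om / 2 by ring]
    at h
  simp only [f1pol, f2pol, fHorizontalCoeff]
  linear_combination (2 * lam * (lam - 1) * (ν - 1) * z * r ^ (lam - 2)) ^ 2 * h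

theorem cos_mul_om_div_two_neg {lam : ℝ} (hlam₀ : -1 / 3 < lam) (hlam₁ : lam < 1) :
    cos ((lam + 1) * om / 2) < 0 := by
  apply cos_neg_of_pi_div_two_lt_of_lt <;> unfold om <;> nlinarith [pi_pos]

theorem fHorizontalCoeff_pos {lam ν : ℝ} (hlam₀ : 0 < lam) (hlam₁ : lam < 1) (hν : ν ≠ 1) :
    0 < fHorizontalCoeff lam ν := by
  refine pow_two_pos_of_ne_zero (mul_ne_zero (mul_ne_zero (mul_ne_zero ?_ ?_) ?_) ?_)
  · positivity
  · linarith
  · exact sub_ne_zero.mpr hν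
  · exact (cos_mul_om_div_two_neg (by linarith) hlam₁).ne

theorem fHorizontalCoeff_div_four_mul_rpow_le {lam ν : ℝ} {f : P3 → P3}
    (hf : ∀ r θ z : ℝ, 0 < r → r < 1 → 0 < θ → θ < om → 0 < z → z < 1 →
      f (r * cos θ, r * sin θ, z) = (f1pol lam ν r θ z, f2pol lam ν r θ z, f3pol lam r θ))
    {a b z : ℝ} (hb : 0 < b) (hab : a ^ 2 + b ^ 2 < 1) (hz : 1 / 2 < z) (hz' : z < 1) :
    fHorizontalCoeff lam ν / 4 * (a ^ 2 + b ^ 2) ^ (lam - 2) ≤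
      (f (a, b, z)).1 ^ 2 + (f (a, b, z)).2.1 ^ 2 + (f (a, b, z)).2.2 ^ 2 := by
  obtain ⟨r, θ, hr, hr1, hθ, hθω, hr2, hcos, hsin⟩ := exists_polar_mem_sector hb hab
  have hfx : f (a, b, z) = (f1pol lam ν r θ z, f2pol lam ν r θ z, f3pol lam r θ) := by
    rw [← hcos, ← hsin]
    exact hf r θ z hr hr1 hθ hθω (by linarith) hz'
  have hκ : 0 ≤ fHorizontalCoeff lam ν := sq_nonneg _
  calc fHorizontalCoeff lam ν / 4 * (a ^ 2 + b ^ 2) ^ (lam - 2)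
      ≤ fHorizontalCoeff lam ν * z ^ 2 * (r ^ (lam - 2)) ^ 2 := by
        rw [← hr2, ← rpow_pow_comm hr.le]
        gcongr
        have hz2 : 1 / 4 ≤ z ^ 2 := by nlinarith
        nlinarith
    _ = f1pol lam ν r θ z ^ 2 + f2pol lam ν r θ z ^ 2 := (f1pol_sq_add_f2pol_sq ..).symm
    _ ≤ _ := by
        rw [hfx]
        exact le_add_of_nonneg_right (sq_nonneg _)

-- The boxes `(0,ε)² × (z₀,z₁)` carry mass `≳ ε^{2-2q}`, which blows up as `ε → 0⁺`.
theorem setLIntegral_eq_top_of_rpow_neg_le {s : Set (ℝ × ℝ × ℝ)} {g : ℝ × ℝ × ℝ → ENNReal}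
    {c q δ z₀ z₁ : ℝ} (hc : 0 < c) (hq : 1 < q) (hδ : 0 < δ) (hz : z₀ < z₁)
    (hs : Ioo 0 δ ×ˢ Ioo 0 δ ×ˢ Ioo z₀ z₁ ⊆ s)
    (hg : ∀ x ∈ Ioo 0 δ ×ˢ Ioo 0 δ ×ˢ Ioo z₀ z₁,
      ENNReal.ofReal (c * (x.1 ^ 2 + x.2.1 ^ 2) ^ (-q)) ≤ g x) :
    ∫⁻ x in s, g x = ⊤ := by
  set C := c * (2 : ℝ) ^ (-q) * (z₁ - z₀)
  have hC : 0 < C := by have := sub_pos.mpr hz; positivity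
  have hbound : ∀ ε ∈ Ioc 0 δ, ENNReal.ofReal (C * ε ^ (2 - 2 * q)) ≤ ∫⁻ x in s, g x := by
    rintro ε ⟨hε, hεδ⟩
    set B := Ioo 0 ε ×ˢ Ioo 0 ε ×ˢ Ioo z₀ z₁
    have hBδ : B ⊆ Ioo 0 δ ×ˢ Ioo 0 δ ×ˢ Ioo z₀ z₁ :=
      prod_mono (Ioo_subset_Ioo_right hεδ) (prod_mono (Ioo_subset_Ioo_right hεδ) subset_rfl)
    have hvol : volume B = ENNReal.ofReal (ε * (ε * (z₁ - z₀))) := by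
      simp only [B, Measure.volume_eq_prod, Measure.prod_prod, Real.volume_Ioo, sub_zero,
        ENNReal.ofReal_mul hε.le]
    have hconst : C * ε ^ (2 - 2 * q) = c * (2 * ε ^ 2) ^ (-q) * (ε * (ε * (z₁ - z₀))) := by
      rw [mul_rpow zero_le_two (by positivity), ← rpow_natCast_mul hε.le,
        show 2 - 2 * q = ((2 : ℕ) : ℝ) * -q + 2 by push_cast; ring, rpow_add hε, rpow_two]
      ring
    calc ENNReal.ofReal (C * ε ^ (2 - 2 * q))
        = ∫⁻ _ in B, ENNReal.ofReal (c * (2 * ε ^ 2) ^ (-q)) := by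
          rw [setLIntegral_const, hvol, ← ENNReal.ofReal_mul (by positivity), hconst]
      _ ≤ ∫⁻ x in B, g x := by
          refine setLIntegral_mono' (measurableSet_Ioo.prod
            (measurableSet_Ioo.prod measurableSet_Ioo)) fun x hx => ?_
          refine le_trans (ENNReal.ofReal_le_ofReal ?_) (hg x (hBδ hx))
          obtain ⟨⟨ha, ha'⟩, ⟨hb, hb'⟩, -⟩ := hx
          gcongr c * ?_
          exact rpow_le_rpow_of_nonpos (by positivity) (by nlinarith) (by linarith)
      _ ≤ ∫⁻ x in s, g x := lintegral_mono_set (hBδ.trans hs)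
  have hlim : Tendsto (fun ε : ℝ => ENNReal.ofReal (C * ε ^ (2 - 2 * q))) (𝓝[>] 0) (𝓝 ⊤) :=
    ENNReal.tendsto_ofReal_atTop.comp
      ((tendsto_rpow_neg_nhdsGT_zero (by linarith)).const_mul_atTop hC)
  exact top_le_iff.mp (le_of_tendsto hlim (mem_of_superset (Ioc_mem_nhdsGT hδ) hbound))

theorem stmt7_general (lam : ℝ) (hlam0 : 0 < lam) (hlam1 : lam < 1)
    (ν : ℝ) (hν1 : ν ≠ 1)
    (f : P3 → P3)
    (hf : ∀ r θ z : ℝ, 0 < r → r < 1 → 0 < θ → θ < om → 0 < z → z < 1 →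
      f (r * Real.cos θ, r * Real.sin θ, z) =
        (f1pol lam ν r θ z, f2pol lam ν r θ z, f3pol lam r θ)) :
    ∫⁻ x in OmegaSet,
      ENNReal.ofReal ((f x).1 ^ 2 + (f x).2.1 ^ 2 + (f x).2.2 ^ 2) = ⊤ := by
  refine setLIntegral_eq_top_of_rpow_neg_le (c := fHorizontalCoeff lam ν / 4) (q := 2 - lam)
    (δ := 1 / 2) (by have := fHorizontalCoeff_pos hlam0 hlam1 hν1; positivity) (by linarith)
    (by norm_num) (by norm_num : (1 / 2 : ℝ) < 1) ?_ ?_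
  all_goals
    rintro ⟨a, b, z⟩ hx
    simp only [mem_prod, mem_Ioo] at hx
    obtain ⟨⟨ha₀, ha⟩, ⟨hb, hb'⟩, hz, hz'⟩ := hx
    have hab : a ^ 2 + b ^ 2 < 1 := by nlinarith
  · exact mk_mem_OmegaSet hb hab (by linarith) hz'
  · rw [neg_sub]
    exact ENNReal.ofReal_le_ofReal (fHorizontalCoeff_div_four_mul_rpow_le hf hb hab hz hz')

/-- For every `ν > 0` with `ν ≠ 1`, the data function `f` fails to be square-integrable:
`∫_Ω ‖f‖² = ∞`, i.e. `f ∉ L²(Ω; ℝ³)`. -/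
theorem stmt7 (lam : ℝ) (hlam0 : 0 < lam) (hlam1 : lam < 1)
    (hlamEq : Real.sin (lam * om) = -lam * Real.sin om)
    (ν : ℝ) (hν : 0 < ν) (hν1 : ν ≠ 1)
    (f : P3 → P3)
    (hf : ∀ r θ z : ℝ, 0 < r → r < 1 → 0 < θ → θ < om → 0 < z → z < 1 →
      f (r * Real.cos θ, r * Real.sin θ, z) =
        (f1pol lam ν r θ z, f2pol lam ν r θ z, f3pol lam r θ)) :
    ∫⁻ x in OmegaSet,
      ENNReal.ofReal ((f x).1 ^ 2 + (f x).2.1 ^ 2 + (f x).2.2 ^ 2) = ⊤ :=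
  stmt7_general lam hlam0 hlam1 ν hν1 f hf
end
end
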